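/- Let A be a field of characteristic zero, B a finite-dimensional commutative A-algebra all of whose residue fields are A, and π : B → A an A-algebra homomorphism. Let (K, e) be a D-field with K algebraically closed, and let F be a subfield of K containing A such that e maps F into the canonical image of F ⊗[A] B in K ⊗[A] B and such that every associated endomorphism ρ^K ∘ e restricts to a bijection of F. Let F' = {x ∈ K : x is algebraic over F}. Then e maps F' into the canonical image of F' ⊗[A] B in K ⊗[A] B, and every associated endomorphism ρ^K ∘ e restricts to a bijection of F'. -/

import Mathlib

/-!
Each associated endomorphism `σ_ρ = ρ^K ∘ e` is a field embedding `K → K` permuting `F`. It sends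
a root of `g ∈ F[X]` to a root of `σ_ρ g`, and since `K` is algebraically closed every root of
`σ_ρ g` arises this way; hence `σ_ρ` permutes the relative algebraic closure `F'`.

For `x ∈ F'`, `e x ∈ K ⊗ B` is a root of the minimal polynomial `P` of `x` over `F`, transported
by `e`, whose coefficients lie in `F ⊗ B`. As `P` is separable, `P'(e x)` is a unit. Because the
residue fields of `B` are `A`, every prime of `K ⊗ B` is the kernel of some `ρ^K`, so an element
killed by all `ρ^K` is nilpotent; the Chinese remainder theorem in `B` gives `w ∈ F' ⊗ B` with
`ρ^K w = σ_ρ x` for all `ρ`, so `e x - w` is nilpotent. The Artinian ring `F' ⊗ B` is Henselian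
along its nilradical, so Hensel's lemma lifts `w` to a root of `P` in `F' ⊗ B`, and a simple root
is unique in its nilpotent neighbourhood, so this root is `e x`.
-/

/-- For an `A`-algebra homomorphism `ρ : B →ₐ[A] A`, the induced `A`-algebra homomorphism
`ρ^L : L ⊗[A] B → L`, determined by `l ⊗ b ↦ l • ρ b`. -/
noncomputable def rhoHom (A L B : Type*) [CommSemiring A] [CommRing L] [Algebra A L]
    [CommRing B] [Algebra A B] (ρ : B →ₐ[A] A) : TensorProduct A L B →ₐ[A] L :=
  (Algebra.TensorProduct.rid A A L).toAlgHom.comp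
    (Algebra.TensorProduct.map (AlgHom.id A L) ρ)

open Polynomial TensorProduct

theorem IsAdicComplete.of_isNilpotent {R : Type*} [CommRing R] {I : Ideal R}
    (hI : IsNilpotent I) : IsAdicComplete I R := by
  obtain ⟨N, hN⟩ := hI
  have hpow : ∀ n, N ≤ n → I ^ n • (⊤ : Submodule R R) = ⊥ := fun n hn => by
    have : I ^ n ≤ I ^ N := Ideal.pow_le_pow_right hn
    rw [hN, Ideal.zero_eq_bot, le_bot_iff] at this
    rw [this, Submodule.bot_smul]
  refine { haus' := fun x hx => ?_, prec' := fun f hf => ⟨f N, fun n => ?_⟩ }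
  · have := hx N
    rwa [hpow N le_rfl, SModEq.bot] at this
  · rcases le_total n N with h | h
    · exact hf h
    · have := hf h
      rw [hpow N le_rfl, SModEq.bot] at this
      rw [hpow n h, SModEq.bot, this]

theorem Polynomial.isNilpotent_eval_sub_eval {T : Type*} [CommRing T] (p : T[X]) {u v : T}
    (h : IsNilpotent (u - v)) : IsNilpotent (p.eval u - p.eval v) := by
  obtain ⟨c, hc⟩ := sub_dvd_eval_sub u v p
  rw [hc]
  exact (Commute.all _ _).isNilpotent_mul_right h

theorem Polynomial.isUnit_eval_of_isNilpotent_sub {T : Type*} [CommRing T] (p : T[X]) {u v : T}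
    (hu : IsUnit (p.eval u)) (h : IsNilpotent (v - u)) : IsUnit (p.eval v) := by
  simpa using (p.isNilpotent_eval_sub_eval h).isUnit_add_right_of_commute hu (Commute.all _ _)

theorem Polynomial.eq_of_isRoot_of_isNilpotent_sub {T : Type*} [CommRing T] {p : T[X]} {u v : T}
    (hu : p.IsRoot u) (hv : p.IsRoot v) (hunit : IsUnit (p.derivative.eval u))
    (hnil : IsNilpotent (v - u)) : v = u := by
  obtain ⟨k, hk⟩ := p.binomExpansion u (v - u)
  rw [add_sub_cancel, hv.eq_zero, hu.eq_zero, zero_add] at hk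
  have hunit' : IsUnit (p.derivative.eval u + k * (v - u)) :=
    ((Commute.all _ _).isNilpotent_mul_left hnil).isUnit_add_left_of_commute hunit
      (Commute.all _ _)
  have : (v - u) * (p.derivative.eval u + k * (v - u)) = 0 := by linear_combination -hk
  exact sub_eq_zero.mp ((hunit'.mul_left_eq_zero).mp this)

theorem RingHom.mem_range_of_isRoot_of_isNilpotent_sub {R T : Type*} [CommRing R]
    [IsArtinianRing R] [CommRing T] {φ : R →+* T} (hφ : Function.Injective φ) {f : T[X]}
    (hf : f.Monic) (hlifts : f ∈ lifts φ) {y : T} (hy : f.IsRoot y)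
    (hy' : IsUnit (f.derivative.eval y)) {u₀ : R} (hu₀ : IsNilpotent (y - φ u₀)) :
    y ∈ φ.range := by
  rcases subsingleton_or_nontrivial T with hT | hT
  · exact ⟨0, Subsingleton.elim _ _⟩
  obtain ⟨g, rfl, -, hg⟩ := lifts_and_degree_eq_and_monic hlifts hf
  have heval : ∀ (p : R[X]) (r : R), (p.map φ).eval (φ r) = φ (p.eval r) := fun p r => by
    rw [eval_map, eval₂_at_apply]
  have hg₀ : g.eval u₀ ∈ nilradical R := by
    rw [mem_nilradical, ← IsNilpotent.map_iff hφ, ← heval, ← sub_zero ((g.map φ).eval _),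
      ← hy.eq_zero]
    exact (g.map φ).isNilpotent_eval_sub_eval (by simpa using hu₀.neg)
  have hg₀' : IsUnit (g.derivative.eval u₀) := by
    refine IsArtinianRing.isUnit_of_mem_nonZeroDivisors
      (comap_nonZeroDivisors_le_of_injective hφ ?_)
    rw [derivative_map] at hy'
    have := (g.derivative.map φ).isUnit_eval_of_isNilpotent_sub hy' (by simpa using hu₀.neg)
    rw [heval] at this
    exact this.mem_nonZeroDivisors
  have := IsAdicComplete.of_isNilpotent (IsArtinianRing.isNilpotent_nilradical (R := R))
  obtain ⟨u, hu, huu₀⟩ := HenselianRing.is_henselian g hg u₀ hg₀ (hg₀'.map _)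
  refine ⟨u, eq_of_isRoot_of_isNilpotent_sub hy ?_ hy' ?_⟩
  · rw [IsRoot, heval, hu.eq_zero, map_zero]
  · have : φ u - y = φ (u - u₀) - (y - φ u₀) := by rw [map_sub]; ring
    rw [this]
    exact (Commute.all _ _).isNilpotent_sub ((mem_nilradical.mp huu₀).map φ) hu₀

section Points

variable {A B : Type*} [CommRing A] [CommRing B] [Algebra A B]

theorem AlgHom.sub_algebraMap_mem_ker (ρ : B →ₐ[A] A) (b : B) :
    b - algebraMap A B (ρ b) ∈ RingHom.ker ρ := by
  simp [RingHom.mem_ker]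

theorem AlgHom.eq_of_ker_eq {ρ ρ' : B →ₐ[A] A} (h : RingHom.ker ρ = RingHom.ker ρ') :
    ρ = ρ' := by
  ext b
  have := RingHom.mem_ker.mp (h ▸ ρ.sub_algebraMap_mem_ker b)
  rwa [map_sub, AlgHom.commutes, Algebra.algebraMap_self_apply, sub_eq_zero, eq_comm] at this

theorem exists_algHom_sub_mem_of_bijective {m : Ideal B}
    (hm : Function.Bijective (algebraMap A (B ⧸ m))) :
    ∃ ρ : B →ₐ[A] A, ∀ b, b - algebraMap A B (ρ b) ∈ m := by
  let ρ := (AlgEquiv.ofBijective (Algebra.ofId A (B ⧸ m)) hm).symm.toAlgHom.comp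
    (Ideal.Quotient.mkₐ A m)
  refine ⟨ρ, fun b => Ideal.Quotient.eq.mp ?_⟩
  have := (AlgEquiv.ofBijective (Algebra.ofId A (B ⧸ m)) hm).apply_symm_apply
    (Ideal.Quotient.mk m b)
  exact this.symm

end Points

section FieldPoints

variable {A B : Type*} [Field A] [CommRing B] [Algebra A B]

theorem AlgHom.ker_isMaximal (ρ : B →ₐ[A] A) : (RingHom.ker ρ).IsMaximal :=
  RingHom.ker_isMaximal_of_surjective _ fun a => ⟨algebraMap A B a, by simp⟩

theorem exists_forall_algHom_apply_eq [FiniteDimensional A B] (a : (B →ₐ[A] A) → A) :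
    ∃ b : B, ∀ ρ : B →ₐ[A] A, ρ b = a ρ := by
  have hcop : Pairwise fun ρ ρ' : B →ₐ[A] A => IsCoprime (RingHom.ker ρ) (RingHom.ker ρ') :=
    fun ρ ρ' hne => Ideal.isCoprime_iff_sup_eq.mpr <|
      ρ.ker_isMaximal.coprime_of_ne ρ'.ker_isMaximal fun h => hne (AlgHom.eq_of_ker_eq h)
  obtain ⟨b, hb⟩ := Ideal.exists_forall_sub_mem_ideal hcop (fun ρ => algebraMap A B (a ρ))
  exact ⟨b, fun ρ => by simpa [RingHom.mem_ker, sub_eq_zero] using hb ρ⟩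

end FieldPoints

section RhoHom

variable {A B L : Type*} [Field A] [CommRing B] [Algebra A B] [CommRing L] [Algebra A L]

@[simp]
theorem rhoHom_tmul (ρ : B →ₐ[A] A) (l : L) (b : B) : rhoHom A L B ρ (l ⊗ₜ b) = ρ b • l := by
  simp [rhoHom]

theorem rhoHom_map {L' : Type*} [CommRing L'] [Algebra A L'] (ρ : B →ₐ[A] A) (f : L →ₐ[A] L')
    (z : L ⊗[A] B) :
    rhoHom A L' B ρ (Algebra.TensorProduct.map f (AlgHom.id A B) z) = f (rhoHom A L B ρ z) := by
  induction z using TensorProduct.induction_on with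
  | zero => simp
  | tmul l b => simp
  | add z z' hz hz' => simp only [map_add, hz, hz']

theorem sub_algebraMap_rhoHom_mem {P : Ideal (L ⊗[A] B)} {ρ : B →ₐ[A] A}
    (hρ : ∀ b, b - algebraMap A B (ρ b) ∈ P.comap Algebra.TensorProduct.includeRight)
    (z : L ⊗[A] B) :
    z - algebraMap L (L ⊗[A] B) (rhoHom A L B ρ z) ∈ P := by
  induction z using TensorProduct.induction_on with
  | zero => simp
  | tmul l b =>
    have : l ⊗ₜ b - algebraMap L (L ⊗[A] B) (rhoHom A L B ρ (l ⊗ₜ b))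
        = (l ⊗ₜ 1) * Algebra.TensorProduct.includeRight (b - algebraMap A B (ρ b)) := by
      rw [rhoHom_tmul, Algebra.TensorProduct.algebraMap_apply,
        Algebra.TensorProduct.includeRight_apply, Algebra.TensorProduct.tmul_mul_tmul, mul_one,
        one_mul, tmul_sub, Algebra.algebraMap_eq_smul_one (ρ b), tmul_smul, smul_tmul',
        Algebra.algebraMap_self_apply]
    rw [this]
    exact P.mul_mem_left _ (hρ b)
  | add z z' hz hz' =>
    simpa only [map_add, add_sub_add_comm] using P.add_mem hz hz'

theorem isNilpotent_of_forall_rhoHom_eq_zero [FiniteDimensional A B]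
    (hres : ∀ m : Ideal B, m.IsMaximal → Function.Bijective (algebraMap A (B ⧸ m)))
    {z : L ⊗[A] B} (hz : ∀ ρ : B →ₐ[A] A, rhoHom A L B ρ z = 0) : IsNilpotent z := by
  have : IsArtinianRing B := IsArtinianRing.of_finite A B
  refine nilpotent_iff_mem_prime.mpr fun P hP => ?_
  obtain ⟨ρ, hρ⟩ := exists_algHom_sub_mem_of_bijective
    (hres _ (Ideal.IsPrime.isMaximal' (hP.comap Algebra.TensorProduct.includeRight)))
  simpa [hz ρ] using sub_algebraMap_rhoHom_mem hρ z

theorem exists_forall_rhoHom_eq [FiniteDimensional A B] (c : (B →ₐ[A] A) → L) :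
    ∃ w : L ⊗[A] B, ∀ ρ, rhoHom A L B ρ w = c ρ := by
  classical
  have := Fintype.ofFinite (B →ₐ[A] A)
  choose ε hε using fun ρ : B →ₐ[A] A =>
    exists_forall_algHom_apply_eq (B := B) fun ρ' => if ρ' = ρ then 1 else 0
  refine ⟨∑ ρ, c ρ ⊗ₜ ε ρ, fun ρ' => ?_⟩
  simp [hε]

end RhoHom

section AlgebraicClosure

variable {A K : Type*} [Field A] [Field K] [Algebra A K] {F : IntermediateField A K} {σ : K →+* K}

theorem isAlgebraic_apply_of_mapsTo (hσ : Set.MapsTo σ F F) {x : K} (hx : IsAlgebraic F x) :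
    IsAlgebraic F (σ x) :=
  hx.ringHom_of_comp_eq (σ.restrict F F hσ) σ (σ.restrict F F hσ).injective rfl

theorem exists_isAlgebraic_apply_eq [IsAlgClosed K] (hσ : Set.BijOn σ F F) {y : K}
    (hy : IsAlgebraic F y) : ∃ x, IsAlgebraic F x ∧ σ x = y := by
  obtain ⟨g, hg0, hgy⟩ := hy
  let σF := σ.restrict F F hσ.mapsTo
  have hσF : Function.Surjective σF := fun z => by
    obtain ⟨x, hx, hxz⟩ := hσ.surjOn z.2
    exact ⟨⟨x, hx⟩, Subtype.ext hxz⟩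
  obtain ⟨h, rfl⟩ := map_surjective σF hσF g
  have hh0 : h ≠ 0 := by rintro rfl; exact hg0 (Polynomial.map_zero _)
  have hroots : ((h.map (algebraMap F K)).map σ).roots = (h.map (algebraMap F K)).roots.map σ :=
    (IsAlgClosed.splits _).roots_map σ
  have hcomp : (h.map (algebraMap F K)).map σ = (h.map σF).map (algebraMap F K) := by
    rw [Polynomial.map_map, Polynomial.map_map]; rfl
  have hy : y ∈ ((h.map (algebraMap F K)).map σ).roots := by
    rw [hcomp, mem_roots (by simpa using hg0), IsRoot, eval_map, ← aeval_def, hgy]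
  rw [hroots, Multiset.mem_map] at hy
  obtain ⟨x, hx, rfl⟩ := hy
  refine ⟨x, ⟨h, hh0, ?_⟩, rfl⟩
  rw [aeval_def, ← eval_map]
  exact (mem_roots (by simpa using hh0)).mp hx

theorem bijOn_setOf_isAlgebraic [IsAlgClosed K] (hσ : Set.BijOn σ F F) :
    Set.BijOn σ {x | IsAlgebraic F x} {x | IsAlgebraic F x} :=
  ⟨fun _ => isAlgebraic_apply_of_mapsTo hσ.mapsTo, σ.injective.injOn,
    fun _ hy => exists_isAlgebraic_apply_eq hσ hy⟩

end AlgebraicClosure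

theorem mem_range_map_of_isSeparable {A B K : Type*} [Field A] [CommRing B] [Algebra A B]
    [FiniteDimensional A B] [Field K] [Algebra A K]
    (hres : ∀ m : Ideal B, m.IsMaximal → Function.Bijective (algebraMap A (B ⧸ m)))
    (e : K →ₐ[A] K ⊗[A] B) {F : IntermediateField A K}
    (hFe : ∀ x ∈ F, e x ∈ (Algebra.TensorProduct.map F.val (AlgHom.id A B)).range)
    {L : IntermediateField A K} (hFL : F ≤ L) {x : K}
    (hx : IsSeparable F x) (hσx : ∀ ρ : B →ₐ[A] A, rhoHom A K B ρ (e x) ∈ L) :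
    e x ∈ (Algebra.TensorProduct.map L.val (AlgHom.id A B)).range := by
  have : IsArtinianRing (L ⊗[A] B) := IsArtinianRing.of_finite L (L ⊗[A] B)
  set Φ := Algebra.TensorProduct.map L.val (AlgHom.id A B)
  have hΦ : Function.Injective Φ :=
    TensorProduct.map_injective_of_flat_flat _ _ Subtype.val_injective Function.injective_id
  have hFΦ : ∀ c ∈ F, e c ∈ Φ.range := fun c hc => by
    obtain ⟨w, hw⟩ := hFe c hc
    refine ⟨Algebra.TensorProduct.map (IntermediateField.inclusion hFL) (AlgHom.id A B) w, ?_⟩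
    rw [← hw]
    exact (AlgHom.congr_fun (Algebra.TensorProduct.map_comp _ _ _ _) w).symm
  obtain ⟨w, hw⟩ := exists_forall_rhoHom_eq (B := B) fun ρ => (⟨_, hσx ρ⟩ : L)
  let ψ : F →+* K ⊗[A] B := (e : K →+* K ⊗[A] B).comp (algebraMap F K)
  have heval (p : F[X]) : (p.map ψ).eval (e x) = e (aeval x p) := by
    rw [eval_map]
    change eval₂ _ ((e : K →+* K ⊗[A] B) x) p = _
    rw [← hom_eval₂, ← aeval_def]
    rfl
  change e x ∈ Φ.toRingHom.range
  refine RingHom.mem_range_of_isRoot_of_isNilpotent_sub (φ := Φ.toRingHom) hΦ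
    ((minpoly.monic hx.isIntegral).map ψ) ?_ (u₀ := w) ?_ ?_ ?_
  · rw [lifts_iff_coeff_lifts]
    intro n
    rw [coeff_map]
    exact hFΦ _ (minpoly F x |>.coeff n).2
  · rw [IsRoot, heval, minpoly.aeval, map_zero]
  · rw [derivative_map, heval]
    exact (isUnit_iff_ne_zero.mpr (hx.aeval_derivative_ne_zero (minpoly.aeval F x))).map e
  · refine isNilpotent_of_forall_rhoHom_eq_zero hres fun ρ => ?_
    have := rhoHom_map ρ L.val w
    rw [hw] at this
    rw [map_sub, sub_eq_zero]
    exact this.symm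

theorem relative_algebraic_closure_is_inversive_D_subfield_general
    {A B K : Type*} [Field A] [CharZero A] [CommRing B] [Algebra A B]
    [FiniteDimensional A B]
    (hres : ∀ m : Ideal B, m.IsMaximal → Function.Bijective (algebraMap A (B ⧸ m)))
    [Field K] [Algebra A K] [IsAlgClosed K]
    (e : K →ₐ[A] TensorProduct A K B)
    (F : IntermediateField A K)
    (hFe : ∀ x : K, x ∈ F →
      e x ∈ (Algebra.TensorProduct.map F.val (AlgHom.id A B)).range)
    (hFσ : ∀ ρ : B →ₐ[A] A,
      Set.BijOn (fun x : K => rhoHom A K B ρ (e x)) (F : Set K) (F : Set K))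
    (F' : Subalgebra A K) (hF' : ∀ x : K, x ∈ F' ↔ IsAlgebraic F x) :
    (∀ x : K, x ∈ F' →
      e x ∈ (Algebra.TensorProduct.map F'.val (AlgHom.id A B)).range) ∧
    ∀ ρ : B →ₐ[A] A,
      Set.BijOn (fun x : K => rhoHom A K B ρ (e x)) (F' : Set K) (F' : Set K) := by
  have hF'_eq : (F' : Set K) = {x | IsAlgebraic F x} := Set.ext hF'
  have hσ : ∀ ρ : B →ₐ[A] A, Set.BijOn (fun x => rhoHom A K B ρ (e x)) F' F' := fun ρ =>
    hF'_eq ▸ bijOn_setOf_isAlgebraic (σ := ((rhoHom A K B ρ).comp e : K →+* K)) (hFσ ρ)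
  refine ⟨fun x hx => ?_, hσ⟩
  have : CharZero F := charZero_of_injective_algebraMap (algebraMap A F).injective
  let L := F'.toIntermediateField fun y hy => (hF' _).2 ((hF' y).1 hy).inv
  exact mem_range_map_of_isSeparable hres e hFe (L := L)
    (fun y hy => (hF' y).2 (isAlgebraic_algebraMap (⟨y, hy⟩ : F)))
    (PerfectField.separable_of_irreducible (minpoly.irreducible ((hF' x).1 hx).isIntegral))
    fun ρ => (hσ ρ).mapsTo hx

/-- Let `A` be a field of characteristic zero, `B` a finite-dimensional
commutative `A`-algebra all of whose residue fields are `A`, and `π : B → A` an `A`-algebra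
homomorphism.  Let `(K, e)` be a `D`-field with `K` algebraically closed, and `F` a subfield
of `K` containing `A` such that `e` maps `F` into the canonical image of `F ⊗[A] B` in
`K ⊗[A] B` and each associated endomorphism `ρ^K ∘ e` restricts to a bijection of `F`.
Let `F' = {x ∈ K : x algebraic over F}`.  Then `e` maps `F'` into the canonical image of
`F' ⊗[A] B`, and each `ρ^K ∘ e` restricts to a bijection of `F'`. -/
theorem relative_algebraic_closure_is_inversive_D_subfield
    {A B K : Type*} [Field A] [CharZero A] [CommRing B] [Algebra A B]
    [FiniteDimensional A B]
    (hres : ∀ m : Ideal B, m.IsMaximal → Function.Bijective (algebraMap A (B ⧸ m)))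
    (π : B →ₐ[A] A)
    [Field K] [Algebra A K] [IsAlgClosed K]
    (e : K →ₐ[A] TensorProduct A K B)
    (hD : ∀ x : K, rhoHom A K B π (e x) = x)
    (F : IntermediateField A K)
    (hFe : ∀ x : K, x ∈ F →
      e x ∈ (Algebra.TensorProduct.map F.val (AlgHom.id A B)).range)
    (hFσ : ∀ ρ : B →ₐ[A] A,
      Set.BijOn (fun x : K => rhoHom A K B ρ (e x)) (F : Set K) (F : Set K))
    (F' : Subalgebra A K) (hF' : ∀ x : K, x ∈ F' ↔ IsAlgebraic F x) :
    (∀ x : K, x ∈ F' →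
      e x ∈ (Algebra.TensorProduct.map F'.val (AlgHom.id A B)).range) ∧
    ∀ ρ : B →ₐ[A] A,
      Set.BijOn (fun x : K => rhoHom A K B ρ (e x)) (F' : Set K) (F' : Set K) :=
  relative_algebraic_closure_is_inversive_D_subfield_general hres e F hFe hFσ F' hF'
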